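/- Assumptions and notation as in the Section 4 construction: (W,S) is an irreducible Coxeter system of finite rank with m_{st} < ∞ for all s,t ∈ S, whose Coxeter graph G is not a tree, with fixed s_1, s_2 ∈ S such that m := m_{s_1s_2} ≥ 4; p : G′ → G is the universal covering with fixed edge {s_1′, s_2′} over {s_1, s_2}, and V = ⊕_{a∈S′} ℂ α_a is the resulting representation of W. Let V_0 := {v ∈ V : s·v = v for all s ∈ S}. If m > 4 and v ∈ V ∖ V_0, then the W-subrepresentation of V generated by v is all of V. -/

import Mathlib

/-- The Coxeter graph of a Coxeter matrix `M`: two distinct vertices `s, t` are adjacent iff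
`M s t ≥ 3` or `M s t = ∞` (encoded as `0` in Mathlib), i.e. iff `M s t ≠ 2`. -/
def coxeterGraph {B : Type*} (M : CoxeterMatrix B) : SimpleGraph B where
  Adj s t := s ≠ t ∧ M s t ≠ 2
  symm := by
    constructor
    intro s t h
    exact ⟨h.1.symm, by rw [M.symmetric]; exact h.2⟩
  loopless := by constructor; intro s h; exact h.1 rfl

open Finsupp Classical in
/-- The Section 4 operators: for each `s ∈ S`, a linear operator on `V = ⊕_{a ∈ S′} ℂ α_a`,
where `S′` is the vertex set of the universal covering `p : G′ → G` of the Coxeter graph `G`,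
and `α_a = Finsupp.single a 1`.  Here `{s₁′, s₂′}` is the fixed edge of `G′` over the edge
`{s₁, s₂}` of `G` (with `m = m_{s₁s₂} ≥ 4`).  The defining formulas are:
(i) if `p a = s` then `s·α_a = −α_a`;
(ii) `s₁·α_{s₂′} = α_{s₂′} + 2cos(2π/m) α_{s₁′}` and `s₂·α_{s₁′} = α_{s₁′} + 2cos(2π/m) α_{s₂′}`;
(iii) otherwise, if `s` is not adjacent to `p a` in `G` (equivalently, under the covering
hypotheses, `a` has no neighbour in `G′` lying over `s`), then `s·α_a = α_a`;
(iv) otherwise `s·α_a = α_a + 2cos(π/m_{s,p(a)}) α_b`, where `b` is the unique neighbour of `a`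
in `G′` with `p b = s`. -/
noncomputable def sec4Act {B B' : Type*} (M : CoxeterMatrix B) (G' : SimpleGraph B')
    (p : B' → B) (s₁ s₂ : B) (s₁' s₂' : B') (s : B) : (B' →₀ ℂ) →ₗ[ℂ] (B' →₀ ℂ) :=
  Finsupp.lift _ ℂ _ fun a =>
    if p a = s then -single a 1
    else if s = s₁ ∧ a = s₂' then
      single s₂' 1 + (2 * Real.cos (2 * Real.pi / (M s₁ s₂ : ℝ)) : ℂ) • single s₁' 1
    else if s = s₂ ∧ a = s₁' then
      single s₁' 1 + (2 * Real.cos (2 * Real.pi / (M s₁ s₂ : ℝ)) : ℂ) • single s₂' 1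
    else if h : ∃ b, G'.Adj a b ∧ p b = s then
      single a 1 + (2 * Real.cos (Real.pi / (M s (p a) : ℝ)) : ℂ) • single h.choose 1
    else single a 1

/-- The subspace of vectors fixed by all the operators `σ s`. -/
def fixedSubmodule {B V : Type*} [AddCommGroup V] [Module ℂ V]
    (σ : B → V →ₗ[ℂ] V) : Submodule ℂ V where
  carrier := {v | ∀ s, σ s v = v}
  add_mem' := by
    intro a b ha hb s
    simp [map_add, ha s, hb s]
  zero_mem' := by intro s; simp
  smul_mem' := by
    intro c a ha s
    simp [map_smul, ha s]

/-!
Subtracting the identity from a simple reflection `s` kills every coordinate off the fibre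
`p⁻¹(s)`, and on a vector supported on an adjacent fibre it acts as a transport along the edges
of the tree `G′`, weighted by `2cos(π/m_{st})` and, on the edge `{s₁′, s₂′}`, by `2cos(2π/m)`; all
these weights are nonzero because `m > 4`. Starting from `s·v - v ≠ 0` we transport a nonzero
vector to the fibre over `s₁` with a nonzero `s₁′`-coordinate. Going to the fibre over `s₂` and
back multiplies every coordinate by `4cos²(π/m)`, except the `s₁′`-coordinate, which is
multiplied by `4cos²(2π/m)`; subtracting `4cos²(π/m)` times the vector isolates `α_{s₁′}`.
Transporting `α_{s₁′}` along `G′` then yields every `α_a`.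
-/

open Finsupp

theorem SimpleGraph.Preconnected.induction_on_adj {V : Type*} {G : SimpleGraph V}
    (hG : G.Preconnected) {P : V → Prop} (hP : ∀ a b, G.Adj a b → P a → P b) {a : V}
    (ha : P a) (b : V) : P b := by
  obtain ⟨w⟩ := hG a b
  induction w with
  | nil => exact ha
  | cons hab _ ih => exact ih (hP _ _ hab ha)

/-- The value `m = ∞` is encoded as `0`, and then `π / 0 = 0`. -/
theorem Real.cos_pi_div_natCast_pos {n : ℕ} (h1 : n ≠ 1) (h2 : n ≠ 2) :
    0 < Real.cos (Real.pi / n) := by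
  rcases Nat.eq_zero_or_pos n with rfl | hn
  · simp
  have hn3 : (3 : ℝ) ≤ n := by exact_mod_cast (show 3 ≤ n by omega)
  apply Real.cos_pos_of_mem_Ioo
  constructor
  · have : 0 < Real.pi / n := by positivity
    linarith [Real.pi_pos]
  · rw [div_lt_iff₀ (by linarith)]
    nlinarith [Real.pi_pos]

theorem Real.cos_two_pi_div_natCast_pos {n : ℕ} (hn : 4 < n) :
    0 < Real.cos (2 * Real.pi / n) := by
  have hn5 : (5 : ℝ) ≤ n := by exact_mod_cast hn
  apply Real.cos_pos_of_mem_Ioo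
  constructor
  · have : 0 < 2 * Real.pi / n := by positivity
    linarith [Real.pi_pos]
  · rw [div_lt_iff₀ (by linarith)]
    nlinarith [Real.pi_pos]

theorem Real.cos_two_pi_div_natCast_lt {n : ℕ} (hn : 2 ≤ n) :
    Real.cos (2 * Real.pi / n) < Real.cos (Real.pi / n) := by
  have hn2 : (2 : ℝ) ≤ n := by exact_mod_cast hn
  have hpi := Real.pi_pos
  apply Real.cos_lt_cos_of_nonneg_of_le_pi (by positivity)
  · rw [div_le_iff₀ (by linarith)]
    nlinarith
  · rw [div_lt_div_iff₀ (by linarith) (by linarith)]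
    nlinarith

open Classical in
/-- The coefficient of `α_b` in `p(b)·α_a` for adjacent `a, b`. -/
noncomputable def sec4Coeff {B B' : Type*} (M : CoxeterMatrix B) (p : B' → B) (s₁ s₂ : B)
    (s₁' s₂' : B') (a b : B') : ℂ :=
  if (a = s₂' ∧ b = s₁') ∨ (a = s₁' ∧ b = s₂') then
    (2 * Real.cos (2 * Real.pi / (M s₁ s₂ : ℝ)) : ℂ)
  else (2 * Real.cos (Real.pi / (M (p b) (p a) : ℝ)) : ℂ)

section Sec4

variable {B B' : Type*} {M : CoxeterMatrix B} {G' : SimpleGraph B'} {p : B' → B}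
  {s₁ s₂ : B} {s₁' s₂' : B'}

local notation "σ" => sec4Act M G' p s₁ s₂ s₁' s₂'
local notation "c" => sec4Coeff M p s₁ s₂ s₁' s₂'

theorem sec4Coeff_comm (a b : B') : c a b = c b a := by
  unfold sec4Coeff
  rw [M.symmetric (p b)]
  congr 1
  exact propext (by tauto)

open Classical in
theorem sec4Act_single (s : B) (a : B') :
    σ s (single a 1) =
      if p a = s then -single a 1
      else if s = s₁ ∧ a = s₂' then
        single s₂' 1 + (2 * Real.cos (2 * Real.pi / (M s₁ s₂ : ℝ)) : ℂ) • single s₁' 1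
      else if s = s₂ ∧ a = s₁' then
        single s₁' 1 + (2 * Real.cos (2 * Real.pi / (M s₁ s₂ : ℝ)) : ℂ) • single s₂' 1
      else if h : ∃ b, G'.Adj a b ∧ p b = s then
        single a 1 + (2 * Real.cos (Real.pi / (M s (p a) : ℝ)) : ℂ) • single h.choose 1
      else single a 1 := by
  simp [sec4Act, lift_apply, sum_single_index]

theorem sec4Act_single_apply_of_ne (hp₁ : p s₁' = s₁) (hp₂ : p s₂' = s₂) {s : B} (a : B')
    {x : B'} (hx : p x ≠ s) : σ s (single a 1) x = single a 1 x := by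
  rw [sec4Act_single]
  split_ifs with h1 h2 h3 h4
  · have : a ≠ x := fun h => hx (h ▸ h1)
    simp [this]
  · have : s₁' ≠ x := fun h => hx (by rw [← h, hp₁, h2.1])
    simp [h2.2, this]
  · have : s₂' ≠ x := fun h => hx (by rw [← h, hp₂, h3.1])
    simp [h3.2, this]
  · have : h4.choose ≠ x := fun h => hx (h ▸ h4.choose_spec.2)
    simp [this]
  · rfl

theorem sec4Act_apply_of_ne (hp₁ : p s₁' = s₁) (hp₂ : p s₂' = s₂) {s : B} (u : B' →₀ ℂ)
    {x : B'} (hx : p x ≠ s) : σ s u x = u x := by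
  have : lapply x ∘ₗ σ s = lapply x := by
    refine lhom_ext fun a r => ?_
    rw [← mul_one r, ← smul_eq_mul, ← smul_single, map_smul, LinearMap.comp_apply, map_smul,
      lapply_apply, sec4Act_single_apply_of_ne hp₁ hp₂ a hx]
    rfl
  exact LinearMap.congr_fun this u

theorem sec4Act_sub_self_mem_supported (hp₁ : p s₁' = s₁) (hp₂ : p s₂' = s₂) (s : B)
    (u : B' →₀ ℂ) : σ s u - u ∈ supported ℂ ℂ (p ⁻¹' {s}) := by
  rw [mem_supported']
  intro x hx
  rw [Finsupp.sub_apply, sec4Act_apply_of_ne hp₁ hp₂ u hx, sub_self]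

variable (hmorph : ∀ a b : B', G'.Adj a b → (coxeterGraph M).Adj (p a) (p b))
  (hcover : ∀ a : B', Set.BijOn p (G'.neighborSet a) ((coxeterGraph M).neighborSet (p a)))
  (hedge : G'.Adj s₁' s₂') (hp₁ : p s₁' = s₁) (hp₂ : p s₂' = s₂)

include hmorph hcover hedge hp₁ hp₂ in
theorem sec4Act_single_of_adj {a b : B'} (hab : G'.Adj a b) :
    σ (p b) (single a 1) = single a 1 + c a b • single b 1 := by
  have hnb : ∀ {b'}, G'.Adj a b' → p b' = p b → b' = b :=
    fun hb' h => (hcover a).injOn hb' hab h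
  rw [sec4Act_single, if_neg (hmorph a b hab).ne]
  by_cases h₁ : p b = s₁ ∧ a = s₂'
  · obtain rfl := hnb (h₁.2 ▸ hedge.symm) (by rw [hp₁, h₁.1])
    rw [if_pos h₁, sec4Coeff, if_pos (Or.inl ⟨h₁.2, rfl⟩), h₁.2]
  by_cases h₂ : p b = s₂ ∧ a = s₁'
  · obtain rfl := hnb (h₂.2 ▸ hedge) (by rw [hp₂, h₂.1])
    rw [if_neg h₁, if_pos h₂, sec4Coeff, if_pos (Or.inr ⟨h₂.2, rfl⟩), h₂.2]
  have hex : ∃ b', G'.Adj a b' ∧ p b' = p b := ⟨b, hab, rfl⟩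
  rw [if_neg h₁, if_neg h₂, dif_pos hex, hnb hex.choose_spec.1 hex.choose_spec.2, sec4Coeff,
    if_neg]
  rintro (⟨rfl, rfl⟩ | ⟨rfl, rfl⟩)
  · exact h₁ ⟨hp₁, rfl⟩
  · exact h₂ ⟨hp₂, rfl⟩

include hmorph hcover hedge hp₁ hp₂ in
theorem sec4Act_apply_of_adj {u : B' →₀ ℂ} {a b : B'} (hu : u ∈ supported ℂ ℂ (p ⁻¹' {p a}))
    (hab : G'.Adj a b) : σ (p b) u b = c a b * u a := by
  rw [supported_eq_span_single] at hu
  refine LinearMap.eqOn_span (f := lapply b ∘ₗ σ (p b)) (g := c a b • lapply a) ?_ hu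
  rintro _ ⟨x, hx : p x = p a, rfl⟩
  obtain ⟨y, hxy : G'.Adj x y, hy⟩ := (hcover x).surjOn (hx ▸ hmorph a b hab)
  have hxb : x ≠ b := fun h => (hmorph a b hab).ne (h ▸ hx).symm
  have hyb : y = b ↔ x = a := by
    constructor
    · rintro rfl
      exact (hcover y).injOn hxy.symm hab.symm hx
    · rintro rfl
      exact (hcover x).injOn hxy hab hy
  simp only [LinearMap.comp_apply, LinearMap.smul_apply, lapply_apply, ← hy,
    sec4Act_single_of_adj hmorph hcover hedge hp₁ hp₂ hxy]
  by_cases hxa : x = a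
  · subst hxa
    simp [hyb.2 rfl, hxb]
  · simp [hxb, Ne.symm hxa, mt hyb.1 hxa]

include hmorph in
theorem sec4Coeff_ne_zero (hm : 4 < M s₁ s₂) {a b : B'} (hab : G'.Adj a b) : c a b ≠ 0 := by
  obtain ⟨hne, h2⟩ := hmorph b a hab.symm
  rw [sec4Coeff]
  split_ifs
  · exact_mod_cast (mul_pos two_pos (Real.cos_two_pi_div_natCast_pos hm)).ne'
  · exact_mod_cast (mul_pos two_pos (Real.cos_pi_div_natCast_pos (M.off_diagonal _ _ hne) h2)).ne'

open Classical in
include hcover hedge hp₂ in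
theorem sec4Coeff_of_adj_of_mem_fibres (hs : s₁ ≠ s₂) {a b : B'} (hab : G'.Adj a b)
    (ha : p a = s₁) (hb : p b = s₂) :
    c a b = if a = s₁' then (2 * Real.cos (2 * Real.pi / (M s₁ s₂ : ℝ)) : ℂ)
      else (2 * Real.cos (Real.pi / (M s₁ s₂ : ℝ)) : ℂ) := by
  rw [sec4Coeff]
  by_cases ha' : a = s₁'
  · subst ha'
    have : b = s₂' := (hcover a).injOn hab hedge (hb.trans hp₂.symm)
    rw [if_pos (Or.inr ⟨rfl, this⟩), if_pos rfl]
  · have ha₂ : a ≠ s₂' := fun h => hs (by rw [← ha, h, hp₂])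
    rw [if_neg (by tauto), if_neg ha', ha, hb, M.symmetric]

variable {U : Submodule ℂ (B' →₀ ℂ)} (hU : ∀ s, ∀ u ∈ U, sec4Act M G' p s₁ s₂ s₁' s₂' s u ∈ U)

include hU in
theorem sec4Act_sub_self_mem (s : B) {u : B' →₀ ℂ} (hu : u ∈ U) : σ s u - u ∈ U :=
  U.sub_mem (hU s u hu) hu

include hmorph hcover hedge hp₁ hp₂ hU in
theorem exists_mem_supported_apply_ne_zero_of_adj (hm : 4 < M s₁ s₂) {a b : B'}
    (hab : G'.Adj a b) (h : ∃ u ∈ U, u ∈ supported ℂ ℂ (p ⁻¹' {p a}) ∧ u a ≠ 0) :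
    ∃ u ∈ U, u ∈ supported ℂ ℂ (p ⁻¹' {p b}) ∧ u b ≠ 0 := by
  obtain ⟨u, huU, hu, hua⟩ := h
  refine ⟨σ (p b) u - u, sec4Act_sub_self_mem hU _ huU,
    sec4Act_sub_self_mem_supported hp₁ hp₂ _ u, ?_⟩
  have hub : u b = 0 := (mem_supported' ℂ u).1 hu b (hmorph a b hab).ne.symm
  rw [Finsupp.sub_apply, sec4Act_apply_of_adj hmorph hcover hedge hp₁ hp₂ hu hab, hub, sub_zero]
  exact mul_ne_zero (sec4Coeff_ne_zero hmorph hm hab) hua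

include hmorph hcover hedge hp₁ hp₂ hU in
theorem single_mem_of_adj (hm : 4 < M s₁ s₂) {a b : B'} (hab : G'.Adj a b)
    (ha : single a 1 ∈ U) : single b 1 ∈ U := by
  have h := sec4Act_sub_self_mem hU (p b) ha
  rw [sec4Act_single_of_adj hmorph hcover hedge hp₁ hp₂ hab, add_sub_cancel_left] at h
  simpa [smul_smul, inv_mul_cancel₀ (sec4Coeff_ne_zero hmorph hm hab)] using
    U.smul_mem (c a b)⁻¹ h

include hmorph hcover hedge hp₁ hp₂ in
theorem sec4Act_sub_self_sub_self_of_mem_supported (h12 : (coxeterGraph M).Adj s₁ s₂)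
    {u : B' →₀ ℂ} (hu : u ∈ supported ℂ ℂ (p ⁻¹' {s₁})) :
    σ s₁ (σ s₂ u - u) - (σ s₂ u - u) - (2 * Real.cos (Real.pi / (M s₁ s₂ : ℝ)) : ℂ) ^ 2 • u =
      (((2 * Real.cos (2 * Real.pi / (M s₁ s₂ : ℝ)) : ℂ) ^ 2 -
        (2 * Real.cos (Real.pi / (M s₁ s₂ : ℝ)) : ℂ) ^ 2) * u s₁') • single s₁' 1 := by
  set u₁ := σ s₂ u - u
  have hu₁ : u₁ ∈ supported ℂ ℂ (p ⁻¹' {s₂}) := sec4Act_sub_self_mem_supported hp₁ hp₂ _ u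
  ext y
  by_cases hy : p y = s₁
  · obtain ⟨z, hyz : G'.Adj y z, hz⟩ := (hcover y).surjOn (show (coxeterGraph M).Adj (p y) s₂
      from hy ▸ h12)
    have hu₁z : u₁ z = c y z * u y := by
      have h := sec4Act_apply_of_adj hmorph hcover hedge hp₁ hp₂ (by rwa [hy]) hyz
      rw [hz] at h
      rw [Finsupp.sub_apply, h, (mem_supported' ℂ u).1 hu z (by simp [hz, h12.ne.symm]),
        sub_zero]
    have h := sec4Act_apply_of_adj hmorph hcover hedge hp₁ hp₂ (by rwa [hz]) hyz.symm
    rw [hy] at h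
    rw [Finsupp.sub_apply, Finsupp.sub_apply, h, hu₁z,
      (mem_supported' ℂ u₁).1 hu₁ y (by simp [hy, h12.ne]), sub_zero, sec4Coeff_comm z y,
      sec4Coeff_of_adj_of_mem_fibres hcover hedge hp₂ h12.ne hyz hy hz]
    simp only [Finsupp.smul_apply, smul_eq_mul]
    by_cases hys : y = s₁'
    · rw [if_pos hys, hys, single_eq_same]
      ring
    · rw [if_neg hys, single_eq_of_ne hys]
      ring
  · have hys : y ≠ s₁' := fun h => hy (h ▸ hp₁)
    simp only [Finsupp.sub_apply, Finsupp.smul_apply, sec4Act_apply_of_ne hp₁ hp₂ u₁ hy,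
      (mem_supported' ℂ u).1 hu y hy, single_eq_of_ne hys, sub_self, smul_zero]

include hmorph hcover hedge hp₁ hp₂ hU in
theorem single_mem_of_mem_supported (hm : 4 < M s₁ s₂) {u : B' →₀ ℂ} (huU : u ∈ U)
    (hu : u ∈ supported ℂ ℂ (p ⁻¹' {s₁})) (hus₁' : u s₁' ≠ 0) : single s₁' 1 ∈ U := by
  have h12 : (coxeterGraph M).Adj s₁ s₂ :=
    ⟨fun h => by have := M.diagonal s₂; rw [h] at hm; omega, by omega⟩
  have hcoef : ((2 * Real.cos (2 * Real.pi / (M s₁ s₂ : ℝ)) : ℂ) ^ 2 -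
      (2 * Real.cos (Real.pi / (M s₁ s₂ : ℝ)) : ℂ) ^ 2) * u s₁' ≠ 0 := by
    refine mul_ne_zero (sub_ne_zero.2 ?_) hus₁'
    have hpos := Real.cos_two_pi_div_natCast_pos hm
    have hlt := Real.cos_two_pi_div_natCast_lt (show 2 ≤ M s₁ s₂ by omega)
    have : (2 * Real.cos (2 * Real.pi / (M s₁ s₂ : ℝ))) ^ 2 ≠
        (2 * Real.cos (Real.pi / (M s₁ s₂ : ℝ))) ^ 2 := by nlinarith
    exact_mod_cast this
  refine (U.smul_mem_iff hcoef).1 ?_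
  rw [← sec4Act_sub_self_sub_self_of_mem_supported hmorph hcover hedge hp₁ hp₂ h12 hu]
  exact U.sub_mem (sec4Act_sub_self_mem hU s₁ (sec4Act_sub_self_mem hU s₂ huU))
    (U.smul_mem _ huU)

include hmorph hcover hedge hp₁ hp₂ hU in
theorem eq_top_of_mem_of_not_mem_fixedSubmodule (hG' : G'.Connected) (hm : 4 < M s₁ s₂)
    {v : B' →₀ ℂ} (hvU : v ∈ U) (hv : v ∉ fixedSubmodule σ) : U = ⊤ := by
  obtain ⟨s, hs⟩ := not_forall.1 hv
  obtain ⟨a, ha⟩ := Finsupp.support_nonempty_iff.2 (sub_ne_zero.2 hs)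
  have hsupp : σ s v - v ∈ supported ℂ ℂ (p ⁻¹' {s}) :=
    sec4Act_sub_self_mem_supported hp₁ hp₂ s v
  have hpa : p a = s := by
    by_contra h
    exact mem_support_iff.1 ha ((mem_supported' ℂ _).1 hsupp a h)
  obtain ⟨u, huU, hu, hus₁'⟩ : ∃ u ∈ U, u ∈ supported ℂ ℂ (p ⁻¹' {p s₁'}) ∧ u s₁' ≠ 0 :=
    hG'.preconnected.induction_on_adj (fun _ _ hab =>
      exists_mem_supported_apply_ne_zero_of_adj hmorph hcover hedge hp₁ hp₂ hU hm hab)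
      ⟨σ s v - v, sec4Act_sub_self_mem hU s hvU, by rwa [hpa], mem_support_iff.1 ha⟩ s₁'
  have hsingle : ∀ x, single x 1 ∈ U :=
    hG'.preconnected.induction_on_adj
      (fun _ _ hab => single_mem_of_adj hmorph hcover hedge hp₁ hp₂ hU hm hab)
      (single_mem_of_mem_supported hmorph hcover hedge hp₁ hp₂ hU hm huU (by rwa [← hp₁]) hus₁')
  rw [eq_top_iff, ← supported_univ, supported_eq_span_single, Submodule.span_le]
  rintro _ ⟨x, -, rfl⟩
  exact hsingle x

end Sec4

theorem statement6 {B B' W : Type*} [Group W]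
    (M : CoxeterMatrix B) (cs : CoxeterSystem M W)
    (s₁ s₂ : B)
    (G' : SimpleGraph B') (htree : G'.IsTree) (p : B' → B)
    (hmorph : ∀ a b : B', G'.Adj a b → (coxeterGraph M).Adj (p a) (p b))
    (hcover : ∀ a : B', Set.BijOn p (G'.neighborSet a) ((coxeterGraph M).neighborSet (p a)))
    (s₁' s₂' : B') (hedge : G'.Adj s₁' s₂') (hp₁ : p s₁' = s₁) (hp₂ : p s₂' = s₂)
    (ρ : Representation ℂ W (B' →₀ ℂ))
    (hρ : ∀ s : B, ρ (cs.simple s) = sec4Act M G' p s₁ s₂ s₁' s₂' s)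
    (hm4 : 4 < M s₁ s₂) :
    ∀ v : B' →₀ ℂ, v ∉ fixedSubmodule (sec4Act M G' p s₁ s₂ s₁' s₂') →
      Submodule.span ℂ {u | ∃ w : W, ρ w v = u} = ⊤ := by
  intro v hv
  set U := Submodule.span ℂ {u | ∃ w : W, ρ w v = u}
  have hinv : ∀ s, ∀ u ∈ U, sec4Act M G' p s₁ s₂ s₁' s₂' s u ∈ U := by
    intro s u hu
    rw [← hρ s]
    refine (Submodule.map_span_le _ _ _).2 ?_ ⟨u, hu, rfl⟩
    rintro _ ⟨w, rfl⟩
    exact Submodule.subset_span ⟨cs.simple s * w, by rw [map_mul]; rfl⟩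
  exact eq_top_of_mem_of_not_mem_fixedSubmodule hmorph hcover hedge hp₁ hp₂ hinv htree.connected
    hm4 (Submodule.subset_span ⟨1, by rw [map_one]; rfl⟩) hv
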